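/- arXiv:2407.10012 — 3 statements merged into one kernel-verified Lean document; each statement's English description precedes it below -/
import Mathlib

section
/- Let u : ℝ² → ℝ² be a continuously differentiable vector field with compact support. Then ‖u‖_{L⁴(ℝ²)} ≤ 2^{1/4}·‖u‖_{L²(ℝ²)}^{1/2}·‖∇u‖_{L²(ℝ²)}^{1/2}. -/
/-!
For `g = ‖u‖²` the fundamental theorem of calculus along horizontal and vertical lines gives
`g (s, t) ≤ ∫ ‖∂₁g (·, t)‖` and `g (s, t) ≤ ∫ ‖∂₂g (s, ·)‖`; multiplying the two bounds and
integrating (Fubini) yields `∫ g² ≤ ‖∂₁g‖₁ ‖∂₂g‖₁`. Since `‖∂ᵢg‖ ≤ 2 ‖u‖ ‖∂ᵢu‖`, Cauchy–Schwarz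
bounds each factor by `2 ‖u‖₂ ‖∂ᵢu‖₂`, and by AM–GM
`4 ‖u‖₂² ‖∂₁u‖₂ ‖∂₂u‖₂ ≤ 2 ‖u‖₂² (‖∂₁u‖₂² + ‖∂₂u‖₂²)`.
-/

open MeasureTheory Finset
open scoped ENNReal

theorem HasCompactSupport.norm_le_integral_norm_deriv {E : Type*} [NormedAddCommGroup E]
    [NormedSpace ℝ E] [CompleteSpace E] {f : ℝ → E} (hf : ContDiff ℝ 1 f)
    (hfs : HasCompactSupport f) (a : ℝ) : ‖f a‖ ≤ ∫ t, ‖deriv f t‖ := by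
  have hint : Integrable fun t => ‖deriv f t‖ :=
    ((hf.continuous_deriv le_rfl).integrable_of_hasCompactSupport hfs.deriv).norm
  calc ‖f a‖ = ‖∫ t in Set.Iic a, deriv f t‖ := by rw [hfs.integral_Iic_deriv_eq hf a]
    _ ≤ ∫ t in Set.Iic a, ‖deriv f t‖ := norm_integral_le_integral_norm _
    _ ≤ ∫ t, ‖deriv f t‖ := setIntegral_le_integral hint (.of_forall fun _ => norm_nonneg _)

section CompactSupport

variable {α β M : Type*} [TopologicalSpace α] [TopologicalSpace β] [Zero M] {f : α × β → M}

theorem HasCompactSupport.comp_prodMk_left [T2Space α] (hf : HasCompactSupport f) (b : β) :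
    HasCompactSupport fun a => f (a, b) :=
  .intro (hf.image continuous_fst) fun a ha =>
    image_eq_zero_of_notMem_tsupport fun hab => ha ⟨(a, b), hab, rfl⟩

theorem HasCompactSupport.comp_prodMk_right [T2Space β] (hf : HasCompactSupport f) (a : α) :
    HasCompactSupport fun b => f (a, b) :=
  .intro (hf.image continuous_snd) fun b hb =>
    image_eq_zero_of_notMem_tsupport fun hab => hb ⟨(a, b), hab, rfl⟩

theorem HasCompactSupport.norm_pow {E : Type*} [NormedAddCommGroup E] {f : α → E}
    (hf : HasCompactSupport f) {n : ℕ} (hn : n ≠ 0) : HasCompactSupport fun x => ‖f x‖ ^ n :=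
  hf.comp_left (g := fun y : E => ‖y‖ ^ n) (by simp [hn])

end CompactSupport

theorem integral_norm_sq_le_of_le_integral_slices {α β E : Type*} [MeasurableSpace α]
    [MeasurableSpace β] [NormedAddCommGroup E] {μ : Measure α} {ν : Measure β} [SigmaFinite μ]
    [SigmaFinite ν] {f : α × β → E} {g₁ g₂ : α × β → ℝ}
    (hf : Integrable (fun p => ‖f p‖ ^ 2) (μ.prod ν)) (hg₁ : Integrable g₁ (μ.prod ν))
    (hg₂ : Integrable g₂ (μ.prod ν)) (h₁ : ∀ p, ‖f p‖ ≤ ∫ x, g₁ (x, p.2) ∂μ)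
    (h₂ : ∀ p, ‖f p‖ ≤ ∫ y, g₂ (p.1, y) ∂ν) :
    ∫ p, ‖f p‖ ^ 2 ∂μ.prod ν ≤ (∫ p, g₁ p ∂μ.prod ν) * ∫ p, g₂ p ∂μ.prod ν := by
  have hle : ∀ p, ‖f p‖ ^ 2 ≤ (∫ y, g₂ (p.1, y) ∂ν) * ∫ x, g₁ (x, p.2) ∂μ := fun p =>
    sq ‖f p‖ ▸ mul_le_mul (h₂ p) (h₁ p) (norm_nonneg _) ((norm_nonneg _).trans (h₂ p))
  calc ∫ p, ‖f p‖ ^ 2 ∂μ.prod ν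
      ≤ ∫ p, (∫ y, g₂ (p.1, y) ∂ν) * ∫ x, g₁ (x, p.2) ∂μ ∂μ.prod ν :=
        integral_mono hf (hg₂.integral_prod_left.mul_prod hg₁.integral_prod_right) hle
    _ = (∫ x, ∫ y, g₂ (x, y) ∂ν ∂μ) * ∫ y, ∫ x, g₁ (x, y) ∂μ ∂ν :=
        integral_prod_mul (fun x => ∫ y, g₂ (x, y) ∂ν) (fun y => ∫ x, g₁ (x, y) ∂μ)
    _ = (∫ p, g₁ p ∂μ.prod ν) * ∫ p, g₂ p ∂μ.prod ν := by
        rw [integral_prod _ hg₂, integral_prod_symm _ hg₁, mul_comm]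

theorem ContDiff.memLp_fderiv_apply {E F : Type*} [NormedAddCommGroup E] [NormedSpace ℝ E]
    [NormedAddCommGroup F] [NormedSpace ℝ F] [MeasurableSpace E] [OpensMeasurableSpace E]
    {μ : Measure E} [IsFiniteMeasureOnCompacts μ] {v : E → F} (hv : ContDiff ℝ 1 v)
    (hvs : HasCompactSupport v) (w : E) (p : ℝ≥0∞) : MemLp (fun x => fderiv ℝ v x w) p μ :=
  (hv.continuous_fderiv_apply one_ne_zero |>.comp (continuous_id.prodMk continuous_const))
    |>.memLp_of_hasCompactSupport (hvs.fderiv_apply ℝ w)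

section NormSq

variable {E F : Type*} [NormedAddCommGroup E] [NormedSpace ℝ E]
  [NormedAddCommGroup F] [InnerProductSpace ℝ F]

theorem norm_fderiv_norm_sq_apply_le {v : E → F} {x : E} (hv : DifferentiableAt ℝ v x) (w : E) :
    ‖fderiv ℝ (fun y => ‖v y‖ ^ 2) x w‖ ≤ 2 * ‖v x‖ * ‖fderiv ℝ v x w‖ := by
  rw [hv.hasFDerivAt.norm_sq.fderiv]
  simp only [smul_apply, ContinuousLinearMap.comp_apply, innerSL_apply_apply]
  rw [two_smul, ← two_mul, norm_mul, Real.norm_two, mul_assoc]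
  gcongr
  exact norm_inner_le_norm _ _

theorem integral_norm_fderiv_norm_sq_apply_le [MeasurableSpace E] [OpensMeasurableSpace E]
    {μ : Measure E} [IsFiniteMeasureOnCompacts μ] {v : E → F} (hv : ContDiff ℝ 1 v)
    (hvs : HasCompactSupport v) (w : E) :
    ∫ x, ‖fderiv ℝ (fun y => ‖v y‖ ^ 2) x w‖ ∂μ ≤
      2 * (√(∫ x, ‖v x‖ ^ 2 ∂μ) * √(∫ x, ‖fderiv ℝ v x w‖ ^ 2 ∂μ)) := by
  have hv₂ : MemLp v 2 μ := hv.continuous.memLp_of_hasCompactSupport hvs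
  have hdv₂ : MemLp (fun x => fderiv ℝ v x w) 2 μ := hv.memLp_fderiv_apply hvs w 2
  have hcs := integral_mul_norm_le_Lp_mul_Lq (μ := μ) (f := v) (g := fun x => fderiv ℝ v x w)
    .two_two (by simpa using hv₂) (by simpa using hdv₂)
  calc ∫ x, ‖fderiv ℝ (fun y => ‖v y‖ ^ 2) x w‖ ∂μ
      ≤ ∫ x, 2 * (‖v x‖ * ‖fderiv ℝ v x w‖) ∂μ := by
        refine integral_mono (memLp_one_iff_integrable.1 <|
          (hv.norm_sq ℝ).memLp_fderiv_apply (hvs.norm_pow two_ne_zero) w 1).norm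
          ((hv₂.norm.integrable_mul hdv₂.norm).const_mul 2) fun x => ?_
        rw [← mul_assoc]
        exact norm_fderiv_norm_sq_apply_le (hv.differentiable one_ne_zero x) w
    _ = 2 * ∫ x, ‖v x‖ * ‖fderiv ℝ v x w‖ ∂μ := integral_const_mul 2 _
    _ ≤ 2 * (√(∫ x, ‖v x‖ ^ 2 ∂μ) * √(∫ x, ‖fderiv ℝ v x w‖ ^ 2 ∂μ)) := by
        gcongr
        rw [Real.sqrt_eq_rpow, Real.sqrt_eq_rpow]
        simpa using hcs

end NormSq

section Plane

variable {E F : Type*} [NormedAddCommGroup E] [NormedSpace ℝ E] [CompleteSpace E]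
  [NormedAddCommGroup F] [InnerProductSpace ℝ F]

theorem norm_le_integral_norm_fderiv_fst {g : ℝ × ℝ → E} (hg : ContDiff ℝ 1 g)
    (hgs : HasCompactSupport g) (p : ℝ × ℝ) : ‖g p‖ ≤ ∫ t, ‖fderiv ℝ g (t, p.2) (1, 0)‖ := by
  have hderiv : ∀ t, deriv (fun s => g (s, p.2)) t = fderiv ℝ g (t, p.2) (1, 0) := fun t =>
    ((hg.differentiable one_ne_zero _).hasFDerivAt.comp_hasDerivAt t
      ((hasDerivAt_id t).prodMk (hasDerivAt_const t p.2))).deriv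
  have hslice : ContDiff ℝ 1 fun s => g (s, p.2) := hg.comp (contDiff_id.prodMk contDiff_const)
  simpa only [hderiv] using (hgs.comp_prodMk_left p.2).norm_le_integral_norm_deriv hslice p.1

theorem norm_le_integral_norm_fderiv_snd {g : ℝ × ℝ → E} (hg : ContDiff ℝ 1 g)
    (hgs : HasCompactSupport g) (p : ℝ × ℝ) : ‖g p‖ ≤ ∫ t, ‖fderiv ℝ g (p.1, t) (0, 1)‖ := by
  have hderiv : ∀ t, deriv (fun s => g (p.1, s)) t = fderiv ℝ g (p.1, t) (0, 1) := fun t =>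
    ((hg.differentiable one_ne_zero _).hasFDerivAt.comp_hasDerivAt t
      ((hasDerivAt_const t p.1).prodMk (hasDerivAt_id t))).deriv
  have hslice : ContDiff ℝ 1 fun s => g (p.1, s) := hg.comp (contDiff_const.prodMk contDiff_id)
  simpa only [hderiv] using (hgs.comp_prodMk_right p.1).norm_le_integral_norm_deriv hslice p.2

theorem integral_norm_sq_le_integral_norm_fderiv_mul {g : ℝ × ℝ → E} (hg : ContDiff ℝ 1 g)
    (hgs : HasCompactSupport g) :
    ∫ p, ‖g p‖ ^ 2 ≤ (∫ p, ‖fderiv ℝ g p (1, 0)‖) * ∫ p, ‖fderiv ℝ g p (0, 1)‖ := by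
  have hsq : Integrable fun p => ‖g p‖ ^ 2 :=
    (hg.continuous.norm.pow 2).integrable_of_hasCompactSupport (hgs.norm_pow two_ne_zero)
  have hD (w : ℝ × ℝ) : Integrable fun p => ‖fderiv ℝ g p w‖ :=
    (memLp_one_iff_integrable.1 <| hg.memLp_fderiv_apply hgs w 1).norm
  exact integral_norm_sq_le_of_le_integral_slices (μ := volume) (ν := volume) hsq (hD _) (hD _)
    (norm_le_integral_norm_fderiv_fst hg hgs) (norm_le_integral_norm_fderiv_snd hg hgs)

theorem integral_norm_pow_four_le_prod {v : ℝ × ℝ → F} (hv : ContDiff ℝ 1 v)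
    (hvs : HasCompactSupport v) :
    ∫ p, ‖v p‖ ^ 4 ≤
      2 * (∫ p, ‖v p‖ ^ 2) * ∫ p, (‖fderiv ℝ v p (1, 0)‖ ^ 2 + ‖fderiv ℝ v p (0, 1)‖ ^ 2) := by
  set Y := ∫ p, ‖v p‖ ^ 2
  set Z₁ := ∫ p, ‖fderiv ℝ v p (1, 0)‖ ^ 2
  set Z₂ := ∫ p, ‖fderiv ℝ v p (0, 1)‖ ^ 2
  have hZ : ∫ p, (‖fderiv ℝ v p (1, 0)‖ ^ 2 + ‖fderiv ℝ v p (0, 1)‖ ^ 2) = Z₁ + Z₂ :=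
    integral_add (hv.memLp_fderiv_apply hvs _ 2).norm.integrable_sq
      (hv.memLp_fderiv_apply hvs _ 2).norm.integrable_sq
  have hGN :=
    integral_norm_sq_le_integral_norm_fderiv_mul (hv.norm_sq ℝ) (hvs.norm_pow two_ne_zero)
  have h₁ := integral_norm_fderiv_norm_sq_apply_le (μ := volume) hv hvs (1, 0)
  have h₂ := integral_norm_fderiv_norm_sq_apply_le (μ := volume) hv hvs (0, 1)
  have hY : 0 ≤ Y := integral_nonneg fun p => by positivity
  calc ∫ p, ‖v p‖ ^ 4 = ∫ p, ‖‖v p‖ ^ 2‖ ^ 2 := by simp only [norm_pow, norm_norm, ← pow_mul]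
    _ ≤ (2 * (√Y * √Z₁)) * (2 * (√Y * √Z₂)) :=
        hGN.trans (mul_le_mul h₁ h₂ (integral_nonneg fun _ => norm_nonneg _) (by positivity))
    _ = 2 * Y * (2 * √Z₁ * √Z₂) := by linear_combination 4 * √Z₁ * √Z₂ * Real.mul_self_sqrt hY
    _ ≤ 2 * Y * (√Z₁ ^ 2 + √Z₂ ^ 2) := by gcongr; exact two_mul_le_add_sq _ _
    _ = 2 * Y * (Z₁ + Z₂) := by
        rw [Real.sq_sqrt (integral_nonneg fun _ => by positivity),
          Real.sq_sqrt (integral_nonneg fun _ => by positivity)]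
    _ = _ := by rw [hZ]

end Plane

noncomputable def prodEquivEuclideanFinTwo : (ℝ × ℝ) ≃L[ℝ] EuclideanSpace ℝ (Fin 2) :=
  (ContinuousLinearEquiv.finTwoArrow ℝ ℝ).symm.trans (EuclideanSpace.equiv (Fin 2) ℝ).symm

theorem volume_preserving_prodEquivEuclideanFinTwo :
    MeasurePreserving prodEquivEuclideanFinTwo :=
  (EuclideanSpace.volume_preserving_symm_measurableEquiv_toLp (Fin 2)).symm.comp
    (volume_preserving_finTwoArrow ℝ).symm

theorem prodEquivEuclideanFinTwo_one_zero :
    prodEquivEuclideanFinTwo (1, 0) = EuclideanSpace.single 0 1 := by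
  ext i; fin_cases i <;> simp [prodEquivEuclideanFinTwo]

theorem prodEquivEuclideanFinTwo_zero_one :
    prodEquivEuclideanFinTwo (0, 1) = EuclideanSpace.single 1 1 := by
  ext i; fin_cases i <;> simp [prodEquivEuclideanFinTwo]

theorem integral_norm_pow_four_le {F : Type*} [NormedAddCommGroup F] [InnerProductSpace ℝ F]
    {u : EuclideanSpace ℝ (Fin 2) → F} (hu : ContDiff ℝ 1 u) (hus : HasCompactSupport u) :
    ∫ x, ‖u x‖ ^ 4 ≤ 2 * (∫ x, ‖u x‖ ^ 2) * ∫ x,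
      (‖fderiv ℝ u x (EuclideanSpace.single 0 1)‖ ^ 2 +
        ‖fderiv ℝ u x (EuclideanSpace.single 1 1)‖ ^ 2) := by
  set Φ := prodEquivEuclideanFinTwo
  have hpull (f : EuclideanSpace ℝ (Fin 2) → ℝ) : ∫ x, f x = ∫ p, f (Φ p) :=
    (volume_preserving_prodEquivEuclideanFinTwo.integral_comp
      Φ.toHomeomorph.measurableEmbedding f).symm
  have key := integral_norm_pow_four_le_prod (hu.comp Φ.contDiff)
    (hus.comp_homeomorph Φ.toHomeomorph)
  simp only [Φ.comp_right_fderiv, Function.comp_apply, ContinuousLinearMap.comp_apply,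
    ContinuousLinearEquiv.coe_coe, prodEquivEuclideanFinTwo_one_zero,
    prodEquivEuclideanFinTwo_zero_one, Φ] at key
  rwa [hpull, hpull, hpull]

/-- Ladyzhenskaya's two-dimensional interpolation inequality with explicit
constant: `‖u‖_{L⁴(ℝ²)} ≤ 2^{1/4}·‖u‖_{L²}^{1/2}·‖∇u‖_{L²}^{1/2}` for compactly
supported `C¹` vector fields on `ℝ²`, where `‖∇u‖_{L²}` is the `L²` norm of the
full (Frobenius) gradient. -/
theorem ladyzhenskaya_L4_dim2
    (u : EuclideanSpace ℝ (Fin 2) → EuclideanSpace ℝ (Fin 2))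
    (hu : ContDiff ℝ 1 u) (hus : HasCompactSupport u) :
    (∫ x, ‖u x‖ ^ 4) ^ ((1 : ℝ) / 4) ≤
      (2 : ℝ) ^ ((1 : ℝ) / 4) *
        ((∫ x, ‖u x‖ ^ 2) ^ ((1 : ℝ) / 2)) ^ ((1 : ℝ) / 2) *
        ((∫ x, ∑ i, ∑ k, (fderiv ℝ u x (EuclideanSpace.single i (1 : ℝ)) k) ^ 2) ^
            ((1 : ℝ) / 2)) ^ ((1 : ℝ) / 2) := by
  set Y := ∫ x, ‖u x‖ ^ 2
  set Z := ∫ x, ∑ i, ∑ k, (fderiv ℝ u x (EuclideanSpace.single i (1 : ℝ)) k) ^ 2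
  have key : ∫ x, ‖u x‖ ^ 4 ≤ 2 * Y * Z := by
    convert integral_norm_pow_four_le hu hus using 3
    simp only [Fin.sum_univ_two, EuclideanSpace.real_norm_sq_eq]
  have hY : 0 ≤ Y := integral_nonneg fun _ => by positivity
  have hZ : 0 ≤ Z := integral_nonneg fun _ => by positivity
  calc _ ≤ (2 * Y * Z) ^ ((1 : ℝ) / 4) :=
        Real.rpow_le_rpow (integral_nonneg fun _ => by positivity) key (by norm_num)
    _ = _ := by
        rw [← Real.rpow_mul hY, ← Real.rpow_mul hZ, Real.mul_rpow (by positivity) hZ,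
          Real.mul_rpow zero_le_two hY]
        norm_num
end

section
/- Let u : ℝ³ → ℝ³ be a continuously differentiable vector field with compact support. Then ‖u‖_{L⁴(ℝ³)} ≤ (4/(3√3))·‖u‖_{L²(ℝ³)}^{1/4}·‖∇u‖_{L²(ℝ³)}^{3/4}. -/
open MeasureTheory Finset

open Set Filter Topology ENNReal

/-!
On every coordinate line, `|u(x)|² ≤ ∫ |u| |∂ᵢu|`: apply the fundamental theorem of calculus to
`|u|²` from both ends of the line. Multiplying two of these bounds and integrating over a plane
slice bounds `∫ |u|⁴` on the slice by a product of two integrals of `|u| |∂ᵢu|`; Cauchy–Schwarz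
in the remaining variable, with the third line bound, gives
`(∫ |u|⁴)² ≤ ∫ |u|² · ∏ᵢ ∫ |∂ᵢu|²`. By AM–GM the product is at most `(‖∇u‖₂² / 3)³`, so the
inequality holds with the constant `3^(-3/8) ≤ 4/(3√3)`.
-/

theorem two_mul_le_integral_abs_of_hasDerivAt {φ φ' : ℝ → ℝ}
    (hφ : ∀ t, HasDerivAt φ (φ' t) t) (hφ' : Continuous φ') (hφs : HasCompactSupport φ)
    (s : ℝ) : 2 * φ s ≤ ∫ t, |φ' t| := by
  have hφ's : HasCompactSupport φ' := by
    simpa only [funext fun t => (hφ t).deriv] using hφs.deriv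
  have hint : Integrable φ' := hφ'.integrable_of_hasCompactSupport hφ's
  have hbot : Tendsto φ atBot (𝓝 0) := hφs.is_zero_at_infty.mono_left atBot_le_cocompact
  have htop : Tendsto φ atTop (𝓝 0) := hφs.is_zero_at_infty.mono_left atTop_le_cocompact
  have hleft : φ s ≤ ∫ t in Iic s, |φ' t| := by
    have := integral_Iic_of_hasDerivAt_of_tendsto' (a := s) (fun t _ => hφ t) hint.integrableOn hbot
    rw [sub_zero] at this
    exact this ▸ integral_mono hint.integrableOn hint.abs.integrableOn fun t => le_abs_self _
  have hright : φ s ≤ ∫ t in Ioi s, |φ' t| := by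
    have := integral_Ioi_of_hasDerivAt_of_tendsto' (a := s) (fun t _ => hφ t) hint.integrableOn htop
    have hneg : φ s = ∫ t in Ioi s, -φ' t := by rw [integral_neg, this, zero_sub, neg_neg]
    exact hneg ▸ integral_mono hint.neg.integrableOn hint.abs.integrableOn fun t => neg_le_abs _
  have hsplit := integral_add_compl (measurableSet_Iic (a := s)) hint.abs
  rw [compl_Iic] at hsplit
  linarith

section LineBound

variable {F : Type*} [NormedAddCommGroup F] [InnerProductSpace ℝ F]

theorem enorm_sq_le_lintegral_enorm_mul_enorm_deriv {v : ℝ → F} (hv : ContDiff ℝ 1 v)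
    (hvs : HasCompactSupport v) (s : ℝ) :
    ‖v s‖ₑ ^ 2 ≤ ∫⁻ t, ‖v t‖ₑ * ‖deriv v t‖ₑ := by
  set φ' : ℝ → ℝ := fun t => 2 * inner ℝ (v t) (deriv v t)
  have hφ : ∀ t, HasDerivAt (fun t => ‖v t‖ ^ 2) (φ' t) t := fun t =>
    ((hv.differentiable one_ne_zero t).hasDerivAt).norm_sq
  have hφ' : Continuous φ' :=
    continuous_const.mul (hv.continuous.inner (hv.continuous_deriv le_rfl))
  have hφs : HasCompactSupport fun t => ‖v t‖ ^ 2 :=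
    hvs.comp_left (g := fun y : F => ‖y‖ ^ 2) (by simp)
  have hreal : ‖v s‖ ^ 2 ≤ ∫ t, ‖inner ℝ (v t) (deriv v t)‖ := by
    have := two_mul_le_integral_abs_of_hasDerivAt hφ hφ' hφs s
    simp only [φ', abs_mul, abs_two, integral_const_mul] at this
    simpa only [Real.norm_eq_abs] using le_of_mul_le_mul_left this two_pos
  have hint : Integrable fun t => inner ℝ (v t) (deriv v t) :=
    (hv.continuous.inner (hv.continuous_deriv le_rfl)).integrable_of_hasCompactSupport
      (hvs.mono fun t ht hvt => ht (by simp [hvt]))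
  calc ‖v s‖ₑ ^ 2 = ENNReal.ofReal (‖v s‖ ^ 2) := by
        rw [ofReal_pow (norm_nonneg _), ofReal_norm]
    _ ≤ ENNReal.ofReal (∫ t, ‖inner ℝ (v t) (deriv v t)‖) := ofReal_le_ofReal hreal
    _ = ∫⁻ t, ‖inner ℝ (v t) (deriv v t)‖ₑ := ofReal_integral_norm_eq_lintegral_enorm hint
    _ ≤ ∫⁻ t, ‖v t‖ₑ * ‖deriv v t‖ₑ := lintegral_mono fun t => by
          simpa only [enorm_eq_nnnorm, ← ENNReal.coe_mul, ENNReal.coe_le_coe] using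
            nnnorm_inner_le_nnnorm (𝕜 := ℝ) (v t) (deriv v t)

variable {E : Type*} [NormedAddCommGroup E] [NormedSpace ℝ E]

theorem enorm_sq_le_lintegral_line {u : E → F} (hu : ContDiff ℝ 1 u)
    (hus : HasCompactSupport u) (x : E) {e : E} (he : e ≠ 0) (s : ℝ) :
    ‖u (x + s • e)‖ₑ ^ 2 ≤
      ∫⁻ t : ℝ, ‖u (x + t • e)‖ₑ * ‖fderiv ℝ u (x + t • e) e‖ₑ := by
  have hline : ContDiff ℝ 1 fun t : ℝ => x + t • e :=
    contDiff_const.add (contDiff_id.smul (contDiff_const (c := e)))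
  have hderiv : ∀ t : ℝ, deriv (fun t : ℝ => u (x + t • e)) t = fderiv ℝ u (x + t • e) e := by
    intro t
    have := ((hasDerivAt_id t).smul_const e).const_add x
    rw [one_smul] at this
    exact ((hu.differentiable one_ne_zero _).hasFDerivAt.comp_hasDerivAt t this).deriv
  have hsupp : HasCompactSupport fun t : ℝ => u (x + t • e) :=
    hus.comp_isClosedEmbedding
      ((Homeomorph.addLeft x).isClosedEmbedding.comp (isClosedEmbedding_smul_left he))
  simpa only [Function.comp_def, hderiv] using
    enorm_sq_le_lintegral_enorm_mul_enorm_deriv (hu.comp hline) hsupp s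

end LineBound

section Lintegral

variable {α β γ : Type*} [MeasurableSpace α] [MeasurableSpace β] [MeasurableSpace γ]
  {μ : Measure α} {ν : Measure β} {ρ : Measure γ}

theorem sq_lintegral_mul_le {f g : α → ℝ≥0∞} (hf : AEMeasurable f μ) (hg : AEMeasurable g μ) :
    (∫⁻ a, f a * g a ∂μ) ^ 2 ≤ (∫⁻ a, f a ^ 2 ∂μ) * ∫⁻ a, g a ^ 2 ∂μ := by
  have h := ENNReal.lintegral_mul_le_Lp_mul_Lq μ Real.HolderConjugate.two_two hf hg
  simp only [Pi.mul_apply, rpow_two] at h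
  calc (∫⁻ a, f a * g a ∂μ) ^ 2
      ≤ ((∫⁻ a, f a ^ 2 ∂μ) ^ (1 / 2 : ℝ) * (∫⁻ a, g a ^ 2 ∂μ) ^ (1 / 2 : ℝ)) ^ 2 := by
        gcongr
    _ = (∫⁻ a, f a ^ 2 ∂μ) * ∫⁻ a, g a ^ 2 ∂μ := by
        rw [mul_pow, ← rpow_natCast, ← rpow_natCast, ← rpow_mul, ← rpow_mul]
        norm_num

variable [SFinite ρ]

theorem lintegral_sq_lintegral_mul_le {f g : β × γ → ℝ≥0∞} (hf : Measurable f)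
    (hg : Measurable g) {K : ℝ≥0∞} (hK : ∀ y, ∫⁻ z, f (y, z) ^ 2 ∂ρ ≤ K) :
    ∫⁻ y, (∫⁻ z, f (y, z) * g (y, z) ∂ρ) ^ 2 ∂ν ≤ K * ∫⁻ p, g p ^ 2 ∂ν.prod ρ := by
  calc ∫⁻ y, (∫⁻ z, f (y, z) * g (y, z) ∂ρ) ^ 2 ∂ν
      ≤ ∫⁻ y, K * ∫⁻ z, g (y, z) ^ 2 ∂ρ ∂ν := lintegral_mono fun y =>
        (sq_lintegral_mul_le (hf.comp measurable_prodMk_left).aemeasurable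
          (hg.comp measurable_prodMk_left).aemeasurable).trans (mul_le_mul_left (hK y) _)
    _ = K * ∫⁻ p, g p ^ 2 ∂ν.prod ρ := by
        rw [lintegral_const_mul _ (hg.pow_const 2).lintegral_prod_right',
          lintegral_prod _ (hg.pow_const 2).aemeasurable]

variable [SFinite ν]

theorem lintegral_pow_four_le_of_sq_le_lintegral {f h₁ h₂ : β × γ → ℝ≥0∞}
    (hh₁ : Measurable h₁) (hh₂ : Measurable h₂)
    (hf₁ : ∀ y z, f (y, z) ^ 2 ≤ ∫⁻ t, h₁ (t, z) ∂ν)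
    (hf₂ : ∀ y z, f (y, z) ^ 2 ≤ ∫⁻ t, h₂ (y, t) ∂ρ) :
    ∫⁻ p, f p ^ 4 ∂ν.prod ρ ≤ (∫⁻ p, h₁ p ∂ν.prod ρ) * ∫⁻ p, h₂ p ∂ν.prod ρ := by
  calc ∫⁻ p, f p ^ 4 ∂ν.prod ρ
      ≤ ∫⁻ p, (∫⁻ t, h₂ (p.1, t) ∂ρ) * ∫⁻ t, h₁ (t, p.2) ∂ν ∂ν.prod ρ :=
        lintegral_mono fun p => by
          rw [show f p ^ 4 = f (p.1, p.2) ^ 2 * f (p.1, p.2) ^ 2 by ring]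
          exact mul_le_mul' (hf₂ _ _) (hf₁ _ _)
    _ = (∫⁻ y, ∫⁻ t, h₂ (y, t) ∂ρ ∂ν) * ∫⁻ z, ∫⁻ t, h₁ (t, z) ∂ν ∂ρ :=
        lintegral_prod_mul hh₂.lintegral_prod_right'.aemeasurable
          hh₁.lintegral_prod_left'.aemeasurable
    _ = (∫⁻ p, h₁ p ∂ν.prod ρ) * ∫⁻ p, h₂ p ∂ν.prod ρ := by
        rw [lintegral_prod _ hh₂.aemeasurable, lintegral_prod_symm _ hh₁.aemeasurable, mul_comm]

variable [SFinite μ]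

theorem sq_lintegral_pow_four_le {f g₁ g₂ g₃ : α × β × γ → ℝ≥0∞} (hf : Measurable f)
    (hg₁ : Measurable g₁) (hg₂ : Measurable g₂) (hg₃ : Measurable g₃)
    (h₁ : ∀ x y z, f (x, y, z) ^ 2 ≤ ∫⁻ t, f (t, y, z) * g₁ (t, y, z) ∂μ)
    (h₂ : ∀ x y z, f (x, y, z) ^ 2 ≤ ∫⁻ t, f (x, t, z) * g₂ (x, t, z) ∂ν)
    (h₃ : ∀ x y z, f (x, y, z) ^ 2 ≤ ∫⁻ t, f (x, y, t) * g₃ (x, y, t) ∂ρ) :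
    (∫⁻ p, f p ^ 4 ∂μ.prod (ν.prod ρ)) ^ 2 ≤
      (∫⁻ p, f p ^ 2 ∂μ.prod (ν.prod ρ)) * (∫⁻ p, g₁ p ^ 2 ∂μ.prod (ν.prod ρ)) *
        (∫⁻ p, g₂ p ^ 2 ∂μ.prod (ν.prod ρ)) * ∫⁻ p, g₃ p ^ 2 ∂μ.prod (ν.prod ρ) := by
  set K := ∫⁻ p, f p * g₁ p ∂μ.prod (ν.prod ρ)
  have hK : ∀ x, ∫⁻ q, f (x, q) ^ 2 ∂ν.prod ρ ≤ K := fun x =>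
    calc ∫⁻ q, f (x, q) ^ 2 ∂ν.prod ρ
        ≤ ∫⁻ q, ∫⁻ t, f (t, q) * g₁ (t, q) ∂μ ∂ν.prod ρ := lintegral_mono fun q => h₁ x _ _
      _ = K := (lintegral_prod_symm _ (hf.mul hg₁).aemeasurable).symm
  have hslice : ∀ x, ∫⁻ q, f (x, q) ^ 4 ∂ν.prod ρ ≤
      (∫⁻ q, f (x, q) * g₂ (x, q) ∂ν.prod ρ) * ∫⁻ q, f (x, q) * g₃ (x, q) ∂ν.prod ρ :=
    fun x => lintegral_pow_four_le_of_sq_le_lintegral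
      ((hf.mul hg₂).comp measurable_prodMk_left) ((hf.mul hg₃).comp measurable_prodMk_left)
      (h₂ x) (h₃ x)
  calc (∫⁻ p, f p ^ 4 ∂μ.prod (ν.prod ρ)) ^ 2
      = (∫⁻ x, ∫⁻ q, f (x, q) ^ 4 ∂ν.prod ρ ∂μ) ^ 2 := by
        rw [lintegral_prod _ (hf.pow_const 4).aemeasurable]
    _ ≤ (∫⁻ x, (∫⁻ q, f (x, q) * g₂ (x, q) ∂ν.prod ρ) *
          ∫⁻ q, f (x, q) * g₃ (x, q) ∂ν.prod ρ ∂μ) ^ 2 := by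
        gcongr with x
        exact hslice x
    _ ≤ (∫⁻ x, (∫⁻ q, f (x, q) * g₂ (x, q) ∂ν.prod ρ) ^ 2 ∂μ) *
          ∫⁻ x, (∫⁻ q, f (x, q) * g₃ (x, q) ∂ν.prod ρ) ^ 2 ∂μ :=
        sq_lintegral_mul_le (hf.mul hg₂).lintegral_prod_right'.aemeasurable
          (hf.mul hg₃).lintegral_prod_right'.aemeasurable
    _ ≤ (K * ∫⁻ p, g₂ p ^ 2 ∂μ.prod (ν.prod ρ)) * (K * ∫⁻ p, g₃ p ^ 2 ∂μ.prod (ν.prod ρ)) :=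
        mul_le_mul' (lintegral_sq_lintegral_mul_le hf hg₂ hK)
          (lintegral_sq_lintegral_mul_le hf hg₃ hK)
    _ = K ^ 2 * ((∫⁻ p, g₂ p ^ 2 ∂μ.prod (ν.prod ρ)) * ∫⁻ p, g₃ p ^ 2 ∂μ.prod (ν.prod ρ)) := by
        ring
    _ ≤ _ := by
        rw [mul_assoc _ (∫⁻ p, g₂ p ^ 2 ∂μ.prod (ν.prod ρ))]
        exact mul_le_mul_left (sq_lintegral_mul_le hf.aemeasurable hg₁.aemeasurable) _

end Lintegral

noncomputable def euclideanOfProd : ℝ × ℝ × ℝ ≃ᵐ EuclideanSpace ℝ (Fin 3) :=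
  ((MeasurableEquiv.refl ℝ).prodCongr MeasurableEquiv.finTwoArrow.symm).trans
    ((MeasurableEquiv.piFinSuccAbove (fun _ => ℝ) 0).symm.trans
      (MeasurableEquiv.toLp 2 (Fin 3 → ℝ)))

theorem euclideanOfProd_apply (a b c : ℝ) : euclideanOfProd (a, b, c) = !₂[a, b, c] := by
  ext i
  fin_cases i <;> rfl

theorem measurePreserving_euclideanOfProd : MeasurePreserving euclideanOfProd :=
  (PiLp.volume_preserving_toLp (Fin 3)).comp <|
    (volume_preserving_piFinSuccAbove (fun _ => ℝ) 0).symm.comp <|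
      (MeasurePreserving.id volume).prod (volume_preserving_finTwoArrow ℝ).symm

theorem sq_lintegral_enorm_pow_four_le {F : Type*} [NormedAddCommGroup F]
    [InnerProductSpace ℝ F] {u : EuclideanSpace ℝ (Fin 3) → F} (hu : ContDiff ℝ 1 u)
    (hus : HasCompactSupport u) :
    (∫⁻ x, ‖u x‖ₑ ^ 4) ^ 2 ≤
      (∫⁻ x, ‖u x‖ₑ ^ 2) * ∏ i, ∫⁻ x, ‖fderiv ℝ u x (EuclideanSpace.single i 1)‖ₑ ^ 2 := by
  set Φ := euclideanOfProd
  set e : Fin 3 → EuclideanSpace ℝ (Fin 3) := fun i => EuclideanSpace.single i 1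
  have hT : ∀ φ : EuclideanSpace ℝ (Fin 3) → ℝ≥0∞, ∫⁻ p, φ (Φ p) = ∫⁻ x, φ x :=
    measurePreserving_euclideanOfProd.lintegral_comp_emb Φ.measurableEmbedding
  have hline : ∀ i x₀ (s : ℝ), ‖u (x₀ + s • e i)‖ₑ ^ 2 ≤
      ∫⁻ t : ℝ, ‖u (x₀ + t • e i)‖ₑ * ‖fderiv ℝ u (x₀ + t • e i) (e i)‖ₑ :=
    fun i x₀ s => enorm_sq_le_lintegral_line hu hus x₀ (by simp [e]) s
  have hf : Measurable fun p => ‖u (Φ p)‖ₑ :=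
    hu.continuous.enorm.measurable.comp Φ.measurable
  have hg : ∀ i, Measurable fun p => ‖fderiv ℝ u (Φ p) (e i)‖ₑ := fun i =>
    ((hu.continuous_fderiv one_ne_zero).clm_apply continuous_const).enorm.measurable.comp
      Φ.measurable
  have key := sq_lintegral_pow_four_le hf (hg 0) (hg 1) (hg 2)
    (fun x y z => by
      have hl : ∀ t, Φ (t, y, z) = !₂[0, y, z] + t • e 0 := fun t => by
        ext i; fin_cases i <;> simp [Φ, e, euclideanOfProd_apply]
      simpa only [hl] using hline 0 !₂[0, y, z] x)
    (fun x y z => by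
      have hl : ∀ t, Φ (x, t, z) = !₂[x, 0, z] + t • e 1 := fun t => by
        ext i; fin_cases i <;> simp [Φ, e, euclideanOfProd_apply]
      simpa only [hl] using hline 1 !₂[x, 0, z] y)
    (fun x y z => by
      have hl : ∀ t, Φ (x, y, t) = !₂[x, y, 0] + t • e 2 := fun t => by
        ext i; fin_cases i <;> simp [Φ, e, euclideanOfProd_apply]
      simpa only [hl] using hline 2 !₂[x, y, 0] z)
  rw [Fin.prod_univ_three, ← hT fun x => ‖u x‖ₑ ^ 4, ← hT fun x => ‖u x‖ₑ ^ 2,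
    ← hT fun x => ‖fderiv ℝ u x (e 0)‖ₑ ^ 2, ← hT fun x => ‖fderiv ℝ u x (e 1)‖ₑ ^ 2,
    ← hT fun x => ‖fderiv ℝ u x (e 2)‖ₑ ^ 2]
  simpa only [← Measure.volume_eq_prod, mul_assoc] using key

section CompactSupport

variable {X E : Type*} [TopologicalSpace X] [MeasurableSpace X] [OpensMeasurableSpace X]
  {μ : Measure X} [IsFiniteMeasureOnCompacts μ] [NormedAddCommGroup E] {f : X → E}

theorem Continuous.integrable_norm_pow_of_hasCompactSupport (hf : Continuous f)
    (hfs : HasCompactSupport f) {n : ℕ} (hn : n ≠ 0) : Integrable (fun x => ‖f x‖ ^ n) μ :=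
  (hf.norm.pow n).integrable_of_hasCompactSupport (hfs.norm.comp_left (zero_pow hn))

theorem Continuous.lintegral_enorm_pow_of_hasCompactSupport (hf : Continuous f)
    (hfs : HasCompactSupport f) {n : ℕ} (hn : n ≠ 0) :
    ∫⁻ x, ‖f x‖ₑ ^ n ∂μ = ENNReal.ofReal (∫ x, ‖f x‖ ^ n ∂μ) := by
  rw [ofReal_integral_eq_lintegral_ofReal (hf.integrable_norm_pow_of_hasCompactSupport hfs hn)
    (ae_of_all _ fun x => by positivity)]
  exact lintegral_congr fun x => by rw [ofReal_pow (norm_nonneg _), ofReal_norm]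

end CompactSupport

theorem sq_integral_norm_pow_four_le {F : Type*} [NormedAddCommGroup F]
    [InnerProductSpace ℝ F] {u : EuclideanSpace ℝ (Fin 3) → F} (hu : ContDiff ℝ 1 u)
    (hus : HasCompactSupport u) :
    (∫ x, ‖u x‖ ^ 4) ^ 2 ≤
      (∫ x, ‖u x‖ ^ 2) * ∏ i, ∫ x, ‖fderiv ℝ u x (EuclideanSpace.single i 1)‖ ^ 2 := by
  have h := sq_lintegral_enorm_pow_four_le hu hus
  have hDu : ∀ i : Fin 3, Continuous fun x => fderiv ℝ u x (EuclideanSpace.single i 1) :=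
    fun i => (hu.continuous_fderiv one_ne_zero).clm_apply continuous_const
  rw [hu.continuous.lintegral_enorm_pow_of_hasCompactSupport hus four_ne_zero,
    hu.continuous.lintegral_enorm_pow_of_hasCompactSupport hus two_ne_zero,
    prod_congr rfl fun i _ =>
      (hDu i).lintegral_enorm_pow_of_hasCompactSupport (hus.fderiv_apply ℝ _) two_ne_zero,
    ← ofReal_pow (integral_nonneg fun x => by positivity),
    ← ofReal_prod_of_nonneg fun i _ => integral_nonneg fun x => by positivity,
    ← ofReal_mul (integral_nonneg fun x => by positivity),
    ofReal_le_ofReal_iff (by positivity)] at h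
  exact h

theorem prod_le_sum_div_three_pow_three {b : Fin 3 → ℝ} (hb : ∀ i, 0 ≤ b i) :
    ∏ i, b i ≤ ((∑ i, b i) / 3) ^ 3 := by
  rw [Fin.prod_univ_three, Fin.sum_univ_three]
  have h0 := hb 0; have h1 := hb 1; have h2 := hb 2
  nlinarith [sq_nonneg (b 0 - b 1), sq_nonneg (b 1 - b 2), sq_nonneg (b 0 - b 2),
    mul_nonneg h0 h1, mul_nonneg h1 h2, mul_nonneg h0 h2]

theorem rpow_le_of_sq_le_mul_div_three_pow {a b d : ℝ} (ha : 0 ≤ a) (hb : 0 ≤ b) (hd : 0 ≤ d)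
    (h : a ^ 2 ≤ b * (d / 3) ^ 3) :
    a ^ ((1 : ℝ) / 4) ≤
      4 / (3 * Real.sqrt 3) * (b ^ ((1 : ℝ) / 2)) ^ ((1 : ℝ) / 4) *
        (d ^ ((1 : ℝ) / 2)) ^ ((3 : ℝ) / 4) := by
  have hpow : ∀ {x : ℝ}, 0 ≤ x → ∀ r : ℝ, (x ^ r) ^ 8 = x ^ (r * 8) := fun hx r => by
    exact_mod_cast (Real.rpow_mul_natCast hx r 8).symm
  have hc : (4 / (3 * Real.sqrt 3)) ^ 8 = 65536 / 531441 := by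
    rw [div_pow, mul_pow, show Real.sqrt 3 ^ 8 = (Real.sqrt 3 ^ 2) ^ 4 by ring,
      Real.sq_sqrt (by norm_num)]
    norm_num
  rw [← pow_le_pow_iff_left₀ (by positivity) (by positivity) (by norm_num : 8 ≠ 0), mul_pow,
    mul_pow, hc, hpow ha, ← Real.rpow_mul hb, ← Real.rpow_mul hd, hpow hb, hpow hd]
  norm_num
  nlinarith [mul_nonneg hb (pow_nonneg hd 3)]

/-- Ladyzhenskaya's three-dimensional `L⁴` interpolation inequality with the
constant `4/(3√3)`: `‖u‖_{L⁴(ℝ³)} ≤ (4/(3√3))·‖u‖_{L²}^{1/4}·‖∇u‖_{L²}^{3/4}`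
for compactly supported `C¹` vector fields on `ℝ³`, where `‖∇u‖_{L²}` is the
`L²` norm of the full (Frobenius) gradient. -/
theorem ladyzhenskaya_L4_dim3
    (u : EuclideanSpace ℝ (Fin 3) → EuclideanSpace ℝ (Fin 3))
    (hu : ContDiff ℝ 1 u) (hus : HasCompactSupport u) :
    (∫ x, ‖u x‖ ^ 4) ^ ((1 : ℝ) / 4) ≤
      (4 / (3 * Real.sqrt 3)) *
        ((∫ x, ‖u x‖ ^ 2) ^ ((1 : ℝ) / 2)) ^ ((1 : ℝ) / 4) *
        ((∫ x, ∑ i, ∑ k, (fderiv ℝ u x (EuclideanSpace.single i (1 : ℝ)) k) ^ 2) ^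
            ((1 : ℝ) / 2)) ^ ((3 : ℝ) / 4) := by
  have hgrad : (∫ x, ∑ i, ∑ k, (fderiv ℝ u x (EuclideanSpace.single i (1 : ℝ)) k) ^ 2) =
      ∑ i, ∫ x, ‖fderiv ℝ u x (EuclideanSpace.single i 1)‖ ^ 2 := by
    have hDu : ∀ i : Fin 3, Continuous fun x => fderiv ℝ u x (EuclideanSpace.single i 1) :=
      fun i => (hu.continuous_fderiv one_ne_zero).clm_apply continuous_const
    rw [← integral_finsetSum _ fun i _ =>
      (hDu i).integrable_norm_pow_of_hasCompactSupport (hus.fderiv_apply ℝ _) two_ne_zero]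
    simp only [EuclideanSpace.norm_sq_eq, Real.norm_eq_abs, sq_abs]
  rw [hgrad]
  refine rpow_le_of_sq_le_mul_div_three_pow (integral_nonneg fun x => by positivity)
    (integral_nonneg fun x => by positivity)
    (sum_nonneg fun i _ => integral_nonneg fun x => by positivity) ?_
  exact (sq_integral_norm_pow_four_le hu hus).trans <| mul_le_mul_of_nonneg_left
    (prod_le_sum_div_three_pow_three fun i => integral_nonneg fun x => by positivity)
    (integral_nonneg fun x => by positivity)
end

section
/- Let u : ℝ³ → ℝ³ be a continuously differentiable vector field with compact support. Then ‖u‖_{L⁶(ℝ³)} ≤ (2/√3)·‖∇u‖_{L²(ℝ³)}. -/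
/-!
Apply the fundamental theorem of calculus to `v = ‖u‖⁴`, from both ends of the `i`-th coordinate
line through `x`: `‖u x‖⁴ ≤ ½ ∫ |∂ᵢ v| dxᵢ`, where `|∂ᵢ v| ≤ 4 ‖u‖³ ‖∂ᵢ u‖`. Taking
square roots and multiplying, the Loomis–Whitney inequality gives
`∫ ‖u‖⁶ ≤ ∏ᵢ (½ ∫ |∂ᵢ v|)^{1/2} ≤ ∏ᵢ (2 ‖u‖₆³ ‖∂ᵢ u‖₂)^{1/2}` by Cauchy–Schwarz, that is
`‖u‖₆⁶ ≤ 64 ∏ᵢ ‖∂ᵢ u‖₂²`. AM–GM on the three factors turns this into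
`‖u‖₆⁶ ≤ (64 / 27) ‖∇u‖₂⁶`, and `(64 / 27)^{1/6} = 2 / √3`.
-/

open MeasureTheory Finset Function
open scoped ENNReal

namespace LoomisWhitney

variable {ι : Type*} [Fintype ι] [DecidableEq ι] {A : ι → Type*} [∀ i, MeasurableSpace (A i)]
  (μ : ∀ i, Measure (A i)) [∀ i, SigmaFinite (μ i)]

/-- Interpolates between the two sides of the Loomis–Whitney inequality (`s = ∅` and
`s = univ`); adding a coordinate to `s` costs one Hölder inequality with `#ι - 1` factors. -/
noncomputable def gridIntegral (p : ℝ) (f : ι → (∀ i, A i) → ℝ≥0∞) (s : Finset ι) :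
    (∀ i, A i) → ℝ≥0∞ :=
  ∫⋯∫⁻_(univ \ s), (fun x => ∏ j, (∫⋯∫⁻_(insert j s), f j ∂μ) x ^ p) ∂μ

variable {μ}

theorem gridIntegral_le_insert {p : ℝ} (hp : (Fintype.card ι - 1 : ℝ) * p = 1)
    {f : ι → (∀ i, A i) → ℝ≥0∞} (hf : ∀ i, Measurable (f i)) {s : Finset ι} {i : ι}
    (hi : i ∉ s) : gridIntegral μ p f s ≤ gridIntegral μ p f (insert i s) := by
  set G : ι → Finset ι → (∀ i, A i) → ℝ≥0∞ := fun j t => ∫⋯∫⁻_t, f j ∂μ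
  have hG : ∀ j t, Measurable (G j t) := fun j t => (hf j).lmarginal μ
  have hcard : ((univ.erase i).card : ℝ) = Fintype.card ι - 1 := by
    rw [card_erase_of_mem (mem_univ i), Nat.cast_sub (card_pos.mpr ⟨i, mem_univ i⟩), card_univ]
    simp
  have hp0 : 0 ≤ p := by
    have : (0 : ℝ) ≤ Fintype.card ι - 1 := hcard ▸ Nat.cast_nonneg _
    nlinarith
  have hunion : univ \ s = insert i (univ \ insert i s) := by
    ext j; by_cases j = i <;> simp_all
  intro x
  simp only [gridIntegral]
  rw [hunion, lmarginal_insert' _ ((measurable_prod _ fun j _ => (hG j _).pow_const p))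
    (by simp)]
  refine lmarginal_mono (fun y => ?_) x
  have hGi : ∀ t, G i (insert i s) (update y i t) = G i (insert i s) y := fun t =>
    lmarginal_update_of_mem μ (mem_insert_self i s) _ _ _
  have hGj : ∀ j ∈ univ.erase i, ∫⁻ t, G j (insert j s) (update y i t) ∂μ i =
      G j (insert j (insert i s)) y := by
    intro j hj
    rw [insert_comm]
    exact (lmarginal_insert _ (hf j) (by simp [hi, (ne_of_mem_erase hj).symm]) y).symm
  calc ∫⁻ t, ∏ j, G j (insert j s) (update y i t) ^ p ∂μ i
      = G i (insert i s) y ^ p *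
          ∫⁻ t, ∏ j ∈ univ.erase i, G j (insert j s) (update y i t) ^ p ∂μ i := by
        simp_rw [← mul_prod_erase univ _ (mem_univ i), hGi]
        exact lintegral_const_mul _ (measurable_prod _ fun j _ =>
          ((hG j _).comp (measurable_update y)).pow_const p)
    _ ≤ G i (insert i s) y ^ p *
          ∏ j ∈ univ.erase i, (∫⁻ t, G j (insert j s) (update y i t) ∂μ i) ^ p := by
        gcongr
        exact ENNReal.lintegral_prod_norm_pow_le _
          (fun j _ => ((hG j _).comp (measurable_update y)).aemeasurable)
          (by rw [sum_const, nsmul_eq_mul, hcard, hp]) (fun _ _ => hp0)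
    _ = ∏ j, G j (insert j (insert i s)) y ^ p := by
        rw [← mul_prod_erase univ _ (mem_univ i), insert_idem, prod_congr rfl fun j hj => by
          rw [hGj j hj]]

theorem gridIntegral_empty_le_univ {p : ℝ} (hp : (Fintype.card ι - 1 : ℝ) * p = 1)
    {f : ι → (∀ i, A i) → ℝ≥0∞} (hf : ∀ i, Measurable (f i)) :
    gridIntegral μ p f ∅ ≤ gridIntegral μ p f univ := by
  suffices ∀ s : Finset ι, gridIntegral μ p f ∅ ≤ gridIntegral μ p f s from this univ
  intro s
  induction s using Finset.induction_on with
  | empty => exact le_rfl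
  | insert i s hi ih => exact ih.trans (gridIntegral_le_insert hp hf hi)

end LoomisWhitney

open LoomisWhitney in
theorem lintegral_prod_lintegral_update_rpow_le {ι : Type*} [Fintype ι] [DecidableEq ι]
    {A : ι → Type*} [∀ i, MeasurableSpace (A i)] (μ : ∀ i, Measure (A i))
    [∀ i, SigmaFinite (μ i)] {p : ℝ} (hp : (Fintype.card ι - 1 : ℝ) * p = 1)
    {f : ι → (∀ i, A i) → ℝ≥0∞} (hf : ∀ i, Measurable (f i)) :
    ∫⁻ x, ∏ i, (∫⁻ t, f i (update x i t) ∂μ i) ^ p ∂Measure.pi μ ≤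
      ∏ i, (∫⁻ x, f i x ∂Measure.pi μ) ^ p := by
  cases isEmpty_or_nonempty (∀ i, A i) with
  | inl h => exact (lintegral_of_isEmpty _ _).trans_le zero_le
  | inr h =>
    obtain ⟨x⟩ := h
    have := gridIntegral_empty_le_univ (μ := μ) hp hf x
    simpa only [gridIntegral, sdiff_empty, insert_empty, lmarginal_singleton, lmarginal_univ,
      sdiff_self, bot_eq_empty, lmarginal_empty, insert_eq_of_mem (mem_univ _)] using this

open Set in
theorem HasCompactSupport.two_mul_enorm_le_lintegral_enorm_deriv {F : Type*}
    [NormedAddCommGroup F] [NormedSpace ℝ F] [CompleteSpace F] {f : ℝ → F}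
    (hf : ContDiff ℝ 1 f) (h2f : HasCompactSupport f) (x : ℝ) :
    2 * ‖f x‖ₑ ≤ ∫⁻ y, ‖deriv f y‖ₑ := by
  have hIic : ‖f x‖ₑ ≤ ∫⁻ y in Iic x, ‖deriv f y‖ₑ := h2f.enorm_le_lintegral_Ici_deriv hf x
  have hIoi : ‖f x‖ₑ ≤ ∫⁻ y in Ioi x, ‖deriv f y‖ₑ := by
    rw [← enorm_neg, ← h2f.integral_Ioi_deriv_eq hf x]
    exact enorm_integral_le_lintegral_enorm _
  calc 2 * ‖f x‖ₑ = ‖f x‖ₑ + ‖f x‖ₑ := two_mul _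
    _ ≤ (∫⁻ y in Iic x, ‖deriv f y‖ₑ) + ∫⁻ y in Ioi x, ‖deriv f y‖ₑ := add_le_add hIic hIoi
    _ = ∫⁻ y, ‖deriv f y‖ₑ := by
      rw [← lintegral_union measurableSet_Ioi (Iic_disjoint_Ioi le_rfl), Iic_union_Ioi,
        setLIntegral_univ]

theorem HasCompactSupport.two_mul_enorm_le_lintegral_enorm_fderiv_update {ι F : Type*}
    [Fintype ι] [DecidableEq ι] [NormedAddCommGroup F] [NormedSpace ℝ F] [CompleteSpace F]
    {v : (ι → ℝ) → F} (hv : ContDiff ℝ 1 v) (h2v : HasCompactSupport v) (x : ι → ℝ) (i : ι) :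
    2 * ‖v x‖ₑ ≤ ∫⁻ t, ‖fderiv ℝ v (update x i t) (Pi.single i 1)‖ₑ := by
  have hderiv : ∀ t, deriv (v ∘ update x i) t = fderiv ℝ v (update x i t) (Pi.single i 1) :=
    fun t => by
    rw [fderiv_comp_deriv _ (hv.differentiable one_ne_zero _)
      (hasDerivAt_update x i t).differentiableAt, deriv_update]
  have hline := (h2v.comp_isClosedEmbedding (isClosedEmbedding_update x i))
    |>.two_mul_enorm_le_lintegral_enorm_deriv (hv.comp (contDiff_update 1 x i)) (x i)
  simpa only [comp_apply, update_eq_self, hderiv] using hline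

theorem norm_fderiv_norm_pow_four_le {E F : Type*} [NormedAddCommGroup E] [NormedSpace ℝ E]
    [NormedAddCommGroup F] [InnerProductSpace ℝ F] {U : E → F} {x : E}
    (hU : DifferentiableAt ℝ U x) (e : E) :
    ‖fderiv ℝ (fun y => ‖U y‖ ^ 4) x e‖ ≤ 4 * ‖U x‖ ^ 3 * ‖fderiv ℝ U x e‖ := by
  have h4 := hU.hasFDerivAt.norm_sq.pow 2
  simp only [← pow_mul] at h4
  rw [h4.fderiv]
  simp only [Nat.add_one_sub_one, mul_one, nsmul_eq_mul, Nat.cast_ofNat, smul_apply,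
    ContinuousLinearMap.comp_apply, coe_innerSL_apply, smul_eq_mul, norm_mul, Real.norm_ofNat,
    norm_pow, Real.norm_eq_abs, abs_norm]
  calc _ ≤ 2 * ‖U x‖ ^ 2 * (2 * (‖U x‖ * ‖fderiv ℝ U x e‖)) := by
        gcongr; exact abs_real_inner_le_norm (U x) _
    _ = 4 * ‖U x‖ ^ 3 * ‖fderiv ℝ U x e‖ := by ring

theorem ENNReal.rpow_inv_two_pow_two (a : ℝ≥0∞) : (a ^ (2⁻¹ : ℝ)) ^ 2 = a := by
  simpa using ENNReal.rpow_inv_natCast_pow two_ne_zero a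

theorem ENNReal.pow_two_rpow_inv_two (a : ℝ≥0∞) : (a ^ 2) ^ (2⁻¹ : ℝ) = a := by
  simpa using ENNReal.pow_rpow_inv_natCast two_ne_zero a

theorem lintegral_enorm_fderiv_norm_pow_four_le {E F : Type*} [NormedAddCommGroup E]
    [NormedSpace ℝ E] [MeasurableSpace E] [OpensMeasurableSpace E] [NormedAddCommGroup F]
    [InnerProductSpace ℝ F] (μ : Measure E) {U : E → F} (hU : ContDiff ℝ 1 U) (e : E) :
    ∫⁻ y, ‖fderiv ℝ (fun y => ‖U y‖ ^ 4) y e‖ₑ ∂μ ≤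
      4 * (∫⁻ y, ‖U y‖ₑ ^ 6 ∂μ) ^ (2⁻¹ : ℝ) * (∫⁻ y, ‖fderiv ℝ U y e‖ₑ ^ 2 ∂μ) ^ (2⁻¹ : ℝ) := by
  have hpt : ∀ y, ‖fderiv ℝ (fun y => ‖U y‖ ^ 4) y e‖ₑ ≤
      4 * ((‖U y‖ₑ ^ 6) ^ (2⁻¹ : ℝ) * (‖fderiv ℝ U y e‖ₑ ^ 2) ^ (2⁻¹ : ℝ)) := fun y => by
    rw [show 6 = 3 * 2 from rfl, pow_mul, ENNReal.pow_two_rpow_inv_two,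
      ENNReal.pow_two_rpow_inv_two, ← mul_assoc]
    calc ‖fderiv ℝ (fun y => ‖U y‖ ^ 4) y e‖ₑ
        = ENNReal.ofReal ‖fderiv ℝ (fun y => ‖U y‖ ^ 4) y e‖ := (ofReal_norm _).symm
      _ ≤ ENNReal.ofReal (4 * ‖U y‖ ^ 3 * ‖fderiv ℝ U y e‖) :=
        ENNReal.ofReal_le_ofReal (norm_fderiv_norm_pow_four_le (hU.differentiable one_ne_zero y) e)
      _ = 4 * ‖U y‖ₑ ^ 3 * ‖fderiv ℝ U y e‖ₑ := by
        rw [ENNReal.ofReal_mul (by positivity), ENNReal.ofReal_mul (by positivity),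
          ENNReal.ofReal_pow (norm_nonneg _), ofReal_norm, ofReal_norm, ENNReal.ofReal_ofNat]
  have hm₁ : AEMeasurable (fun y => ‖U y‖ₑ ^ 6) μ :=
    (hU.continuous.enorm.measurable.pow_const 6).aemeasurable
  have hm₂ : AEMeasurable (fun y => ‖fderiv ℝ U y e‖ₑ ^ 2) μ :=
    (((hU.continuous_fderiv one_ne_zero).clm_apply continuous_const).enorm.measurable.pow_const
      2).aemeasurable
  calc ∫⁻ y, ‖fderiv ℝ (fun y => ‖U y‖ ^ 4) y e‖ₑ ∂μ
      ≤ ∫⁻ y, 4 * ((‖U y‖ₑ ^ 6) ^ (2⁻¹ : ℝ) * (‖fderiv ℝ U y e‖ₑ ^ 2) ^ (2⁻¹ : ℝ)) ∂μ :=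
        lintegral_mono hpt
    _ = 4 * ∫⁻ y, (‖U y‖ₑ ^ 6) ^ (2⁻¹ : ℝ) * (‖fderiv ℝ U y e‖ₑ ^ 2) ^ (2⁻¹ : ℝ) ∂μ :=
        lintegral_const_mul' _ _ (by simp)
    _ ≤ 4 * ((∫⁻ y, ‖U y‖ₑ ^ 6 ∂μ) ^ (2⁻¹ : ℝ) * (∫⁻ y, ‖fderiv ℝ U y e‖ₑ ^ 2 ∂μ) ^ (2⁻¹ : ℝ)) := by
        gcongr
        exact ENNReal.lintegral_mul_norm_pow_le hm₁ hm₂ (by norm_num) (by norm_num) (by norm_num)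
    _ = _ := (mul_assoc _ _ _).symm

theorem ENNReal.le_sixtyFour_mul_prod_of_le_prod_rpow {a : ℝ≥0∞} {b : Fin 3 → ℝ≥0∞}
    (ha : a ≠ ⊤) (h : a ≤ ∏ i, (2 * a ^ (2⁻¹ : ℝ) * b i ^ (2⁻¹ : ℝ)) ^ (2⁻¹ : ℝ)) :
    a ≤ 64 * ∏ i, b i := by
  rcases eq_or_ne a 0 with rfl | ha₀
  · exact zero_le
  have h₄ : a ^ 3 * a ≤ a ^ 3 * (64 * ∏ i, b i) := calc
    a ^ 3 * a = a ^ 4 := (pow_succ a 3).symm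
    _ ≤ (∏ i, (2 * a ^ (2⁻¹ : ℝ) * b i ^ (2⁻¹ : ℝ)) ^ (2⁻¹ : ℝ)) ^ 4 := by gcongr
    _ = ∏ i, (2 * a ^ (2⁻¹ : ℝ) * b i ^ (2⁻¹ : ℝ)) ^ 2 := by
        rw [← prod_pow]
        congr with i
        rw [show 4 = 2 * 2 from rfl, pow_mul, rpow_inv_two_pow_two]
    _ = a ^ 3 * (64 * ∏ i, b i) := by
        simp only [mul_pow, rpow_inv_two_pow_two, Fin.prod_univ_three]
        ring
  exact (ENNReal.mul_le_mul_iff_right (pow_ne_zero 3 ha₀) (pow_ne_top ha)).mp h₄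

theorem Continuous.integrable_norm_pow_of_hasCompactSupport_s13 {X E : Type*} [TopologicalSpace X]
    [MeasurableSpace X] [OpensMeasurableSpace X] {μ : Measure X} [IsFiniteMeasureOnCompacts μ]
    [NormedAddCommGroup E] {g : X → E} (hg : Continuous g) (h2g : HasCompactSupport g) {n : ℕ}
    (hn : n ≠ 0) : Integrable (fun x => ‖g x‖ ^ n) μ := by
  have hsupp : HasCompactSupport fun x => ‖g x‖ ^ n :=
    h2g.comp_left (g := fun z => ‖z‖ ^ n) (by simp [hn])
  exact (hg.norm.pow n).integrable_of_hasCompactSupport hsupp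

theorem MeasureTheory.Integrable.lintegral_enorm_pow_ne_top {α E : Type*} [MeasurableSpace α]
    {μ : Measure α} [NormedAddCommGroup E] {g : α → E} {n : ℕ}
    (hg : Integrable (fun x => ‖g x‖ ^ n) μ) : ∫⁻ x, ‖g x‖ₑ ^ n ∂μ ≠ ⊤ := by
  simpa only [enorm_pow, enorm_norm] using hg.hasFiniteIntegral.ne

theorem lintegral_enorm_pow_six_le {F : Type*} [NormedAddCommGroup F] [InnerProductSpace ℝ F]
    {U : (Fin 3 → ℝ) → F} (hU : ContDiff ℝ 1 U) (hUs : HasCompactSupport U) :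
    ∫⁻ x, ‖U x‖ₑ ^ 6 ≤ 64 * ∏ i, ∫⁻ x, ‖fderiv ℝ U x (Pi.single i 1)‖ₑ ^ 2 := by
  set A := ∫⁻ x, ‖U x‖ₑ ^ 6
  set B : Fin 3 → ℝ≥0∞ := fun i => ∫⁻ x, ‖fderiv ℝ U x (Pi.single i 1)‖ₑ ^ 2
  set v : (Fin 3 → ℝ) → ℝ := fun y => ‖U y‖ ^ 4
  have hv : ContDiff ℝ 1 v := by simpa only [← pow_mul] using (hU.norm_sq ℝ).pow 2
  have hvs : HasCompactSupport v := hUs.comp_left (g := fun z => ‖z‖ ^ 4) (by simp)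
  set f : Fin 3 → (Fin 3 → ℝ) → ℝ≥0∞ := fun i y => 2⁻¹ * ‖fderiv ℝ v y (Pi.single i 1)‖ₑ
  have hf : ∀ i, Measurable (f i) := fun i =>
    ((hv.continuous_fderiv one_ne_zero).clm_apply continuous_const).enorm.measurable.const_mul _
  have hline : ∀ x i, ‖U x‖ₑ ^ 4 ≤ ∫⁻ t, f i (update x i t) := fun x i => by
    rw [lintegral_const_mul' _ _ (by simp), ← ENNReal.mul_le_iff_le_inv two_ne_zero (by simp)]
    simpa [v, enorm_pow] using hvs.two_mul_enorm_le_lintegral_enorm_fderiv_update hv x i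
  have hholder : ∀ i, ∫⁻ y, f i y ≤ 2 * A ^ (2⁻¹ : ℝ) * B i ^ (2⁻¹ : ℝ) := fun i => calc
    ∫⁻ y, f i y = 2⁻¹ * ∫⁻ y, ‖fderiv ℝ v y (Pi.single i 1)‖ₑ := lintegral_const_mul' _ _ (by simp)
    _ ≤ 2⁻¹ * (4 * A ^ (2⁻¹ : ℝ) * B i ^ (2⁻¹ : ℝ)) :=
        mul_le_mul_right (lintegral_enorm_fderiv_norm_pow_four_le volume hU _) _
    _ = 2⁻¹ * (2 * (2 * A ^ (2⁻¹ : ℝ) * B i ^ (2⁻¹ : ℝ))) := by ring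
    _ = 2 * A ^ (2⁻¹ : ℝ) * B i ^ (2⁻¹ : ℝ) :=
        ENNReal.inv_mul_cancel_left two_ne_zero ENNReal.ofNat_ne_top
  have hA : A ≠ ⊤ := (hU.continuous.integrable_norm_pow_of_hasCompactSupport_s13 hUs
    (by norm_num)).lintegral_enorm_pow_ne_top
  refine ENNReal.le_sixtyFour_mul_prod_of_le_prod_rpow hA ?_
  calc A = ∫⁻ x, ∏ _i : Fin 3, (‖U x‖ₑ ^ 4) ^ (2⁻¹ : ℝ) := lintegral_congr fun x => by
        rw [prod_const, card_univ, Fintype.card_fin, show 4 = 2 * 2 from rfl, pow_mul,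
          ENNReal.pow_two_rpow_inv_two, ← pow_mul]
    _ ≤ ∫⁻ x, ∏ i, (∫⁻ t, f i (update x i t)) ^ (2⁻¹ : ℝ) := by
        gcongr with x i
        exact hline x i
    _ ≤ ∏ i, (∫⁻ y, f i y) ^ (2⁻¹ : ℝ) :=
        lintegral_prod_lintegral_update_rpow_le (fun _ => volume) (by norm_num) hf
    _ ≤ ∏ i, (2 * A ^ (2⁻¹ : ℝ) * B i ^ (2⁻¹ : ℝ)) ^ (2⁻¹ : ℝ) := by
        gcongr with i
        exact hholder i

theorem MeasureTheory.integral_norm_pow_eq_toReal_lintegral {α E : Type*} [MeasurableSpace α]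
    {μ : Measure α} [NormedAddCommGroup E] {g : α → E} (hg : AEStronglyMeasurable g μ) (n : ℕ) :
    ∫ x, ‖g x‖ ^ n ∂μ = (∫⁻ x, ‖g x‖ₑ ^ n ∂μ).toReal := by
  have hgn : AEStronglyMeasurable (fun x => ‖g x‖ ^ n) μ := hg.norm.pow n
  rw [integral_eq_lintegral_of_nonneg_ae (.of_forall fun x => by positivity) hgn]
  simp only [ENNReal.ofReal_pow (norm_nonneg _), ofReal_norm]

theorem EuclideanSpace.lintegral_enorm_pow_six_le {F : Type*} [NormedAddCommGroup F]
    [InnerProductSpace ℝ F] {u : EuclideanSpace ℝ (Fin 3) → F} (hu : ContDiff ℝ 1 u)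
    (hus : HasCompactSupport u) :
    ∫⁻ x, ‖u x‖ₑ ^ 6 ≤ 64 * ∏ i, ∫⁻ x, ‖fderiv ℝ u x (EuclideanSpace.single i 1)‖ₑ ^ 2 := by
  set φ := (EuclideanSpace.equiv (Fin 3) ℝ).symm
  have hφ : MeasurePreserving φ := PiLp.volume_preserving_toLp (Fin 3)
  have hfderiv : ∀ y i, fderiv ℝ (u ∘ φ) y (Pi.single i 1) =
      fderiv ℝ u (φ y) (EuclideanSpace.single i 1) := fun y i => by
    rw [fderiv_comp y (hu.differentiable one_ne_zero _) φ.differentiableAt, φ.fderiv]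
    simp [φ]
  have hUs : HasCompactSupport (u ∘ φ) := hus.comp_homeomorph φ.toHomeomorph
  have := _root_.lintegral_enorm_pow_six_le (hu.comp φ.contDiff) hUs
  have hcomp : ∀ g : EuclideanSpace ℝ (Fin 3) → ℝ≥0∞, ∫⁻ y, g (φ y) = ∫⁻ x, g x :=
    hφ.lintegral_comp_emb φ.toHomeomorph.measurableEmbedding
  have hA : ∫⁻ y, ‖u (φ y)‖ₑ ^ 6 = ∫⁻ x, ‖u x‖ₑ ^ 6 := hcomp fun x => ‖u x‖ₑ ^ 6
  have hB : ∀ i, ∫⁻ y, ‖fderiv ℝ u (φ y) (EuclideanSpace.single i 1)‖ₑ ^ 2 =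
      ∫⁻ x, ‖fderiv ℝ u x (EuclideanSpace.single i 1)‖ₑ ^ 2 := fun i =>
    hcomp fun x => ‖fderiv ℝ u x (EuclideanSpace.single i 1)‖ₑ ^ 2
  simpa only [hfderiv, comp_apply, hA, hB] using this

theorem rpow_inv_six_le_of_le_mul_prod {a : ℝ} {b : Fin 3 → ℝ} (ha : 0 ≤ a)
    (hb : ∀ i, 0 ≤ b i) (h : a ≤ 64 * ∏ i, b i) :
    a ^ ((1 : ℝ) / 6) ≤ 2 / √3 * (∑ i, b i) ^ ((1 : ℝ) / 2) := by
  rw [← Real.sqrt_eq_rpow]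
  set S := ∑ i, b i
  have hS : 0 ≤ S := Finset.sum_nonneg fun i _ => hb i
  have hamgm : ∏ i, b i ≤ S ^ 3 / 27 := by
    simp only [S, Fin.prod_univ_three, Fin.sum_univ_three]
    nlinarith [sq_nonneg (b 0 - b 1), sq_nonneg (b 1 - b 2), sq_nonneg (b 0 - b 2),
      mul_nonneg (hb 0) (hb 1), mul_nonneg (hb 1) (hb 2), mul_nonneg (hb 0) (hb 2),
      hb 0, hb 1, hb 2]
  have hc6 : (2 / √3 * √S) ^ 6 = 64 * (S ^ 3 / 27) := by
    rw [mul_pow, div_pow, show 6 = 2 * 3 from rfl, pow_mul, pow_mul, pow_mul,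
      Real.sq_sqrt (by norm_num), Real.sq_sqrt hS]
    ring
  calc a ^ ((1 : ℝ) / 6) ≤ ((2 / √3 * √S) ^ 6) ^ ((1 : ℝ) / 6) :=
        Real.rpow_le_rpow ha (hc6 ▸ h.trans (by gcongr)) (by norm_num)
    _ = 2 / √3 * √S := by
        rw [one_div]
        exact_mod_cast Real.pow_rpow_inv_natCast (by positivity) (by norm_num : 6 ≠ 0)

/-- The Sobolev (Ladyzhenskaya) inequality in three dimensions with the
constant `2/√3`: `‖u‖_{L⁶(ℝ³)} ≤ (2/√3)·‖∇u‖_{L²(ℝ³)}` for compactly supported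
`C¹` vector fields on `ℝ³`, where `‖∇u‖_{L²}` is the `L²` norm of the full
(Frobenius) gradient. -/
theorem ladyzhenskaya_L6_dim3
    (u : EuclideanSpace ℝ (Fin 3) → EuclideanSpace ℝ (Fin 3))
    (hu : ContDiff ℝ 1 u) (hus : HasCompactSupport u) :
    (∫ x, ‖u x‖ ^ 6) ^ ((1 : ℝ) / 6) ≤
      (2 / Real.sqrt 3) *
        (∫ x, ∑ i, ∑ k, (fderiv ℝ u x (EuclideanSpace.single i (1 : ℝ)) k) ^ 2) ^
          ((1 : ℝ) / 2) := by
  have hD : ∀ i, Continuous fun x => fderiv ℝ u x (EuclideanSpace.single i 1) := fun i =>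
    (hu.continuous_fderiv one_ne_zero).clm_apply continuous_const
  have hD_int : ∀ i, Integrable fun x => ‖fderiv ℝ u x (EuclideanSpace.single i 1)‖ ^ 2 :=
    fun i => (hD i).integrable_norm_pow_of_hasCompactSupport_s13 (hus.fderiv_apply ℝ _) two_ne_zero
  have hgrad : ∫ x, ∑ i, ∑ k, (fderiv ℝ u x (EuclideanSpace.single i (1 : ℝ)) k) ^ 2 =
      ∑ i, ∫ x, ‖fderiv ℝ u x (EuclideanSpace.single i 1)‖ ^ 2 := by
    simp_rw [← EuclideanSpace.real_norm_sq_eq]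
    exact integral_finsetSum _ fun i _ => hD_int i
  have hsobolev := ENNReal.toReal_mono
    (ENNReal.mul_ne_top ENNReal.ofNat_ne_top
      (ENNReal.prod_ne_top fun i _ => (hD_int i).lintegral_enorm_pow_ne_top))
    (EuclideanSpace.lintegral_enorm_pow_six_le hu hus)
  rw [ENNReal.toReal_mul, ENNReal.toReal_prod] at hsobolev
  rw [hgrad, integral_norm_pow_eq_toReal_lintegral hu.continuous.aestronglyMeasurable]
  simp_rw [integral_norm_pow_eq_toReal_lintegral (hD _).aestronglyMeasurable]
  exact rpow_inv_six_le_of_le_mul_prod ENNReal.toReal_nonneg (fun i => ENNReal.toReal_nonneg)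
    hsobolev
end
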